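/- arXiv:2408.03666 — 4 statements merged into one kernel-verified Lean document; each statement's English description precedes it below -/
import Mathlib

section
/- Let G₁ and G₂ be finite groups. Then H²(G₁ × G₂, ℂˣ) is isomorphic to H²(G₁, ℂˣ) × H²(G₂, ℂˣ) × Hom(G₁^{ab} ⊗_ℤ G₂^{ab}, ℂˣ), where G^{ab} = G/G' denotes the abelianization. -/
/-- The multiplicative 2-cocycle condition for `α : G → G → ℂˣ` (trivial action). -/
def IsCocycle {G : Type*} [Group G] (α : G → G → ℂˣ) : Prop :=
  ∀ g h k : G, α g h * α (g * h) k = α h k * α g (h * k)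

/-- `A` is a twisted group algebra `ℂ^α G`: it has a `ℂ`-basis indexed by `G`
with multiplication of basis elements twisted by `α`. -/
def IsTwistedGroupAlgebra (G : Type*) [Group G] (α : G → G → ℂˣ)
    (A : Type*) [Ring A] [Algebra ℂ A] : Prop :=
  ∃ b : Module.Basis G ℂ A, ∀ g h : G, b g * b h = (α g h : ℂ) • b (g * h)

/-- The group of 2-cocycles of `G` with values in `ℂˣ` (trivial action). -/
def Z2 (G : Type*) [Group G] : Subgroup (G → G → ℂˣ) where
  carrier := {α | IsCocycle α}
  one_mem' := by intro g h k; simp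
  mul_mem' := by
    intro a b ha hb g h k
    simp only [Pi.mul_apply]
    rw [mul_mul_mul_comm, ha g h k, hb g h k, mul_mul_mul_comm]
  inv_mem' := by
    intro a ha g h k
    simp only [Pi.inv_apply]
    rw [← mul_inv, ha g h k, mul_inv]

/-- The coboundary map `(G → ℂˣ) →* (G → G → ℂˣ)`. -/
def B2hom (G : Type*) [Group G] : (G → ℂˣ) →* (G → G → ℂˣ) where
  toFun μ := fun g h => μ g * μ h * (μ (g * h))⁻¹
  map_one' := by funext g h; simp
  map_mul' μ ν := by
    funext g h
    simp only [Pi.mul_apply, mul_inv]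
    ac_rfl

/-- The group of 2-coboundaries. -/
def B2 (G : Type*) [Group G] : Subgroup (G → G → ℂˣ) := (B2hom G).range

/-- The second cohomology group `H²(G, ℂˣ)` with trivial action (Schur multiplier). -/
abbrev H2 (G : Type*) [Group G] := ↥(Z2 G) ⧸ ((B2 G).comap (Z2 G).subtype)

/-!
A 2-cocycle `α` on `G₁ × G₂` restricts to cocycles on the two factors, and comparing the products
of the basis elements of `(g, 1)` and `(1, y)` of the twisted group algebra in both orders gives
the cross pairing `α((1,y),(g,1)) / α((g,1),(1,y))`. The cocycle identity makes it
bimultiplicative, and it is trivial on coboundaries. Conversely, two cocycles and a bimultiplicative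
`β` give the cocycle `((g,y),(g',y')) ↦ α₁(g,g') α₂(y,y') β(g',y)`. These constructions are
inverse to each other in cohomology: by four instances of the cocycle identity, `α` times the
coboundary of `(g,y) ↦ α((g,1),(1,y))` is exactly the cocycle assembled from the restrictions and
the cross pairing of `α`. Finally, bimultiplicative maps `G₁ × G₂ → ℂˣ` are the homomorphisms
`G₁ᵃᵇ ⊗ G₂ᵃᵇ → ℂˣ`.
-/

-- Without this instance `1 : H2 G` elaborates through `Pi.commGroup` and `*` through `Pi.group`,
-- and `simp` cannot apply `mul_one` across the two.
instance {G : Type*} [Group G] : CommGroup (H2 G) where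
  mul_comm := mul_comm (G := ↥(Z2 G) ⧸ ((B2 G).comap (Z2 G).subtype))

section Cocycle

variable {G H K : Type*} [Group G] [Group H] [Group K] {α : G → G → ℂˣ}

theorem IsCocycle.apply_one_right (hα : IsCocycle α) (g : G) : α g 1 = α 1 1 := by
  simpa using hα g 1 1

theorem IsCocycle.apply_one_left (hα : IsCocycle α) (g : G) : α 1 g = α 1 1 := by
  simpa [mul_comm] using (hα 1 1 g).symm

theorem const_mem_B2 (c : ℂˣ) : (fun _ _ => c : G → G → ℂˣ) ∈ B2 G :=
  ⟨fun _ => c, by funext g h; simp [B2hom]⟩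

theorem IsCocycle.comp (hα : IsCocycle α) (f : H →* G) :
    IsCocycle fun a b => α (f a) (f b) := by
  intro a b c
  simpa only [map_mul] using hα (f a) (f b) (f c)

theorem B2hom_comp (f : H →* G) (μ : G → ℂˣ) (a b : H) :
    B2hom G μ (f a) (f b) = B2hom H (μ ∘ f) a b := by
  simp [B2hom]

def Z2.map (f : H →* G) : Z2 G →* Z2 H where
  toFun α := ⟨fun a b => α.1 (f a) (f b), α.2.comp f⟩
  map_one' := rfl
  map_mul' _ _ := rfl

def H2.map (f : H →* G) : H2 G →* H2 H :=
  QuotientGroup.map _ _ (Z2.map f) <| by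
    rintro α ⟨μ, hμ⟩
    refine ⟨μ ∘ f, ?_⟩
    funext a b
    rw [← B2hom_comp, hμ]
    rfl

theorem H2.map_mk (f : H →* G) (α : Z2 G) :
    H2.map f (QuotientGroup.mk α) = QuotientGroup.mk (Z2.map f α) := rfl

theorem H2.map_comp (f : H →* G) (f' : K →* H) (x : H2 G) :
    H2.map f' (H2.map f x) = H2.map (f.comp f') x := by
  induction x using QuotientGroup.induction_on
  rfl

theorem H2.map_id (x : H2 G) : H2.map (MonoidHom.id G) x = x := by
  induction x using QuotientGroup.induction_on
  rfl

theorem H2.map_one (x : H2 G) : H2.map (1 : H →* G) x = 1 := by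
  induction x using QuotientGroup.induction_on with | H α => ?_
  rw [H2.map_mk, QuotientGroup.eq_one_iff]
  exact const_mem_B2 (α.1 1 1)

end Cocycle

section CrossPairing

variable {G₁ G₂ : Type*} [Group G₁] [Group G₂] {α : G₁ × G₂ → G₁ × G₂ → ℂˣ}

def crossPairing (α : G₁ × G₂ → G₁ × G₂ → ℂˣ) (g : G₁) (y : G₂) : ℂˣ :=
  α (1, y) (g, 1) / α (g, 1) (1, y)

theorem crossPairing_mul (α α' : G₁ × G₂ → G₁ × G₂ → ℂˣ) (g : G₁) (y : G₂) :
    crossPairing (α * α') g y = crossPairing α g y * crossPairing α' g y :=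
  mul_div_mul_comm _ _ _ _

theorem crossPairing_B2hom (μ : G₁ × G₂ → ℂˣ) (g : G₁) (y : G₂) :
    crossPairing (B2hom _ μ) g y = 1 := by
  simp [crossPairing, B2hom, mul_comm]

theorem IsCocycle.crossPairing_one_left (hα : IsCocycle α) (y : G₂) : crossPairing α 1 y = 1 := by
  rw [crossPairing, Prod.mk_one_one, hα.apply_one_right, hα.apply_one_left (1, y), div_self']

theorem IsCocycle.crossPairing_one_right (hα : IsCocycle α) (g : G₁) : crossPairing α g 1 = 1 := by
  rw [crossPairing, Prod.mk_one_one, hα.apply_one_right, hα.apply_one_left (g, 1), div_self']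

theorem IsCocycle.crossPairing_mul_left (hα : IsCocycle α) (g g' : G₁) (y : G₂) :
    crossPairing α (g * g') y = crossPairing α g y * crossPairing α g' y := by
  have h₁ := hα (1, y) (g, 1) (g', 1)
  have h₂ := hα (g, 1) (1, y) (g', 1)
  have h₃ := hα (g, 1) (g', 1) (1, y)
  simp only [crossPairing, Prod.mk_mul_mk, one_mul, mul_one] at h₁ h₂ h₃ ⊢
  rw [div_mul_div_comm, div_eq_div_iff_mul_eq_mul, Units.ext_iff]
  rw [Units.ext_iff] at h₁ h₂ h₃
  push_cast at h₁ h₂ h₃ ⊢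
  grind [Units.ne_zero]

theorem IsCocycle.crossPairing_mul_right (hα : IsCocycle α) (g : G₁) (y y' : G₂) :
    crossPairing α g (y * y') = crossPairing α g y * crossPairing α g y' := by
  have h₁ := hα (1, y) (1, y') (g, 1)
  have h₂ := hα (1, y) (g, 1) (1, y')
  have h₃ := hα (g, 1) (1, y) (1, y')
  simp only [crossPairing, Prod.mk_mul_mk, one_mul, mul_one] at h₁ h₂ h₃ ⊢
  rw [div_mul_div_comm, div_eq_div_iff_mul_eq_mul, Units.ext_iff]
  rw [Units.ext_iff] at h₁ h₂ h₃
  push_cast at h₁ h₂ h₃ ⊢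
  grind [Units.ne_zero]

def IsCocycle.crossPairingHom (hα : IsCocycle α) : G₁ →* G₂ →* ℂˣ where
  toFun g :=
    { toFun := crossPairing α g
      map_one' := hα.crossPairing_one_right g
      map_mul' := hα.crossPairing_mul_right g }
  map_one' := MonoidHom.ext hα.crossPairing_one_left
  map_mul' g g' := MonoidHom.ext (hα.crossPairing_mul_left g g')

def Z2.pairing : Z2 (G₁ × G₂) →* G₁ →* G₂ →* ℂˣ where
  toFun α := α.2.crossPairingHom
  map_one' := by ext; simp [IsCocycle.crossPairingHom, crossPairing]
  map_mul' α α' := by ext g y; exact congrArg Units.val (crossPairing_mul α.1 α'.1 g y)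

def H2.pairing : H2 (G₁ × G₂) →* G₁ →* G₂ →* ℂˣ :=
  QuotientGroup.lift _ Z2.pairing <| by
    rintro α ⟨μ, hμ⟩
    ext g y
    exact congrArg Units.val <|
      (congrArg (crossPairing · g y) hμ).symm.trans (crossPairing_B2hom μ g y)

theorem isCocycle_pairing (β : G₁ →* G₂ →* ℂˣ) : IsCocycle fun a b : G₁ × G₂ => β b.1 a.2 := by
  rintro ⟨g, y⟩ ⟨g', y'⟩ ⟨g'', y''⟩
  simp only [Prod.mk_mul_mk, map_mul, MonoidHom.mul_apply]
  grind

def Z2.ofPairing : (G₁ →* G₂ →* ℂˣ) →* Z2 (G₁ × G₂) where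
  toFun β := ⟨fun a b => β b.1 a.2, isCocycle_pairing β⟩
  map_one' := rfl
  map_mul' _ _ := rfl

def H2.ofPairing : (G₁ →* G₂ →* ℂˣ) →* H2 (G₁ × G₂) :=
  (QuotientGroup.mk' _).comp Z2.ofPairing

theorem H2.pairing_ofPairing (β : G₁ →* G₂ →* ℂˣ) : H2.pairing (H2.ofPairing β) = β :=
  MonoidHom.ext fun g => MonoidHom.ext fun y =>
    show β g y / β 1 1 = β g y by rw [β.map_one, MonoidHom.one_apply, div_one]

theorem Z2.map_inl_ofPairing (β : G₁ →* G₂ →* ℂˣ) :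
    Z2.map (MonoidHom.inl G₁ G₂) (Z2.ofPairing β) = 1 := by
  ext g h
  exact congrArg Units.val (β h).map_one

theorem Z2.map_inr_ofPairing (β : G₁ →* G₂ →* ℂˣ) :
    Z2.map (MonoidHom.inr G₁ G₂) (Z2.ofPairing β) = 1 := by
  ext g h
  exact congrArg Units.val (DFunLike.congr_fun β.map_one g)

theorem H2.map_inl_ofPairing (β : G₁ →* G₂ →* ℂˣ) :
    H2.map (MonoidHom.inl G₁ G₂) (H2.ofPairing β) = 1 :=
  congrArg QuotientGroup.mk (Z2.map_inl_ofPairing β)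

theorem H2.map_inr_ofPairing (β : G₁ →* G₂ →* ℂˣ) :
    H2.map (MonoidHom.inr G₁ G₂) (H2.ofPairing β) = 1 :=
  congrArg QuotientGroup.mk (Z2.map_inr_ofPairing β)

theorem H2.pairing_map_fst (x : H2 G₁) : H2.pairing (H2.map (MonoidHom.fst G₁ G₂) x) = 1 := by
  induction x using QuotientGroup.induction_on with | H α => ?_
  refine MonoidHom.ext fun g => MonoidHom.ext fun y => ?_
  show α.1 1 g / α.1 g 1 = 1
  rw [α.2.apply_one_right, α.2.apply_one_left, div_self']

theorem H2.pairing_map_snd (x : H2 G₂) : H2.pairing (H2.map (MonoidHom.snd G₁ G₂) x) = 1 := by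
  induction x using QuotientGroup.induction_on with | H α => ?_
  refine MonoidHom.ext fun g => MonoidHom.ext fun y => ?_
  show α.1 y 1 / α.1 1 y = 1
  rw [α.2.apply_one_right, α.2.apply_one_left y, div_self']

end CrossPairing

section Product

variable {G₁ G₂ : Type*} [Group G₁] [Group G₂]

theorem IsCocycle.mul_B2hom_eq {α : G₁ × G₂ → G₁ × G₂ → ℂˣ} (hα : IsCocycle α) :
    α * B2hom _ (fun p => α (p.1, 1) (1, p.2)) =
      fun a b => α (a.1, 1) (b.1, 1) * (α (1, a.2) (1, b.2) * crossPairing α b.1 a.2) := by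
  funext ⟨g₁, g₂⟩ ⟨h₁, h₂⟩
  have e₁ := hα (g₁, g₂) (h₁, 1) (1, h₂)
  have e₂ := hα (g₁, 1) (1, g₂) (h₁, 1)
  have e₃ := hα (g₁, 1) (h₁, 1) (1, g₂)
  have e₄ := hα (g₁ * h₁, 1) (1, g₂) (1, h₂)
  simp only [Prod.mk_mul_mk, one_mul, mul_one] at e₁ e₂ e₃ e₄
  simp only [Pi.mul_apply, B2hom, crossPairing, MonoidHom.coe_mk, OneHom.coe_mk, Prod.mk_mul_mk]
  rw [Units.ext_iff] at e₁ e₂ e₃ e₄ ⊢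
  push_cast at e₁ e₂ e₃ e₄ ⊢
  grind [Units.ne_zero]

def H2.prodRestrict : H2 (G₁ × G₂) →* H2 G₁ × H2 G₂ × (G₁ →* G₂ →* ℂˣ) :=
  (H2.map (.inl G₁ G₂)).prod ((H2.map (.inr G₁ G₂)).prod H2.pairing)

def H2.prodInflate : H2 G₁ × H2 G₂ × (G₁ →* G₂ →* ℂˣ) →* H2 (G₁ × G₂) :=
  (H2.map (.fst G₁ G₂)).coprod ((H2.map (.snd G₁ G₂)).coprod H2.ofPairing)

theorem H2.prodInflate_prodRestrict (x : H2 (G₁ × G₂)) : prodInflate (prodRestrict x) = x := by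
  induction x using QuotientGroup.induction_on with | H α => ?_
  set μ : G₁ × G₂ → ℂˣ := fun p => α.1 (p.1, 1) (1, p.2)
  let E := Z2.map (.fst G₁ G₂) (Z2.map (.inl G₁ G₂) α) *
    (Z2.map (.snd G₁ G₂) (Z2.map (.inr G₁ G₂) α) * Z2.ofPairing (Z2.pairing α))
  have hE : E.1 = α.1 * B2hom _ μ := α.2.mul_B2hom_eq.symm
  change QuotientGroup.mk E = QuotientGroup.mk α
  rw [QuotientGroup.eq]
  refine ⟨μ⁻¹, ?_⟩
  change B2hom _ μ⁻¹ = E.1⁻¹ * α.1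
  rw [hE, _root_.map_inv, mul_inv_rev, inv_mul_cancel_right]

theorem H2.prodRestrict_prodInflate (p : H2 G₁ × H2 G₂ × (G₁ →* G₂ →* ℂˣ)) :
    prodRestrict (prodInflate p) = p := by
  obtain ⟨x, y, β⟩ := p
  simp only [prodRestrict, prodInflate, MonoidHom.prod_apply, MonoidHom.coprod_apply,
    _root_.map_mul, H2.map_comp, MonoidHom.fst_comp_inl, MonoidHom.fst_comp_inr,
    MonoidHom.snd_comp_inl, MonoidHom.snd_comp_inr, H2.map_id, H2.map_one, H2.map_inl_ofPairing,
    H2.map_inr_ofPairing, H2.pairing_map_fst, H2.pairing_map_snd, H2.pairing_ofPairing,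
    Prod.mk_mul_mk, mul_one, one_mul]

def H2.prodEquiv : H2 (G₁ × G₂) ≃* H2 G₁ × H2 G₂ × (G₁ →* G₂ →* ℂˣ) :=
  MonoidHom.toMulEquiv H2.prodRestrict H2.prodInflate
    (MonoidHom.ext H2.prodInflate_prodRestrict) (MonoidHom.ext H2.prodRestrict_prodInflate)

end Product

section TensorHom

open TensorProduct

variable {G₁ G₂ M : Type*} [Group G₁] [Group G₂] [CommGroup M]

theorem Abelianization.of_surjective {G : Type*} [Group G] :
    Function.Surjective (Abelianization.of : G → Abelianization G) :=
  QuotientGroup.mk_surjective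

abbrev AbTensor (G₁ G₂ : Type*) [Group G₁] [Group G₂] :=
  Additive (Abelianization G₁) ⊗[ℤ] Additive (Abelianization G₂)

theorem AbTensor.addMonoidHom_ext {A : Type*} [AddCommGroup A] {f f' : AbTensor G₁ G₂ →+ A}
    (h : ∀ g y, f (.ofMul (.of g) ⊗ₜ .ofMul (.of y)) = f' (.ofMul (.of g) ⊗ₜ .ofMul (.of y))) :
    f = f' := by
  refine AddMonoidHom.toIntLinearMap_injective (TensorProduct.ext' fun a b => ?_)
  obtain ⟨g, hg⟩ := Abelianization.of_surjective a.toMul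
  obtain ⟨y, hy⟩ := Abelianization.of_surjective b.toMul
  rw [← ofMul_toMul a, ← ofMul_toMul b, ← hg, ← hy]
  exact h g y

def Abelianization.lift₂ (β : G₁ →* G₂ →* M) : Abelianization G₁ →* Abelianization G₂ →* M :=
  Abelianization.lift
    { toFun g := Abelianization.lift (β g)
      map_one' := Abelianization.hom_ext _ _ (by ext; simp)
      map_mul' g g' := Abelianization.hom_ext _ _ (by ext; simp) }

def AbTensor.lift (β : G₁ →* G₂ →* M) : AbTensor G₁ G₂ →+ Additive M :=
  liftAddHom
    { toFun a := (Abelianization.lift₂ β a.toMul).toAdditive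
      map_zero' := by ext; simp
      map_add' a a' := by ext; simp }
    (fun n a b => by simp)

theorem AbTensor.lift_tmul (β : G₁ →* G₂ →* M) (g : G₁) (y : G₂) :
    AbTensor.lift β (.ofMul (.of g) ⊗ₜ .ofMul (.of y)) = .ofMul (β g y) := by
  simp [AbTensor.lift, Abelianization.lift₂]

def AbTensor.pairing (f : AbTensor G₁ G₂ →+ Additive M) : G₁ →* G₂ →* M where
  toFun g :=
    { toFun y := (f (.ofMul (.of g) ⊗ₜ .ofMul (.of y))).toMul
      map_one' := by simp
      map_mul' y y' := by simp [tmul_add] }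
  map_one' := by ext; simp
  map_mul' g g' := by ext; simp [add_tmul]

def AbTensor.liftEquiv : (G₁ →* G₂ →* M) ≃* Multiplicative (AbTensor G₁ G₂ →+ Additive M) where
  toFun β := .ofAdd (AbTensor.lift β)
  invFun f := AbTensor.pairing f.toAdd
  left_inv β := by ext; simp [AbTensor.pairing, AbTensor.lift_tmul]
  right_inv f := congrArg Multiplicative.ofAdd <| AbTensor.addMonoidHom_ext (f' := f.toAdd)
    fun g y => by simp [AbTensor.pairing, AbTensor.lift_tmul]
  map_mul' β β' := by
    rw [← ofAdd_add]
    exact congrArg Multiplicative.ofAdd <|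
      AbTensor.addMonoidHom_ext fun g y => by simp [AbTensor.lift_tmul]

end TensorHom

theorem stmt_3_general (G₁ G₂ : Type) [Group G₁] [Group G₂] :
    Nonempty (H2 (G₁ × G₂) ≃*
      (H2 G₁ × H2 G₂ ×
        Multiplicative ((TensorProduct ℤ (Additive (Abelianization G₁))
          (Additive (Abelianization G₂))) →+ Additive ℂˣ))) :=
  -- without `N'`, `Multiplicative.mul` is unified against a still pending `MulOneClass` instance
  let T := Multiplicative (AbTensor G₁ G₂ →+ Additive ℂˣ)
  ⟨H2.prodEquiv.trans <| .prodCongr (N' := H2 G₂ × T) (.refl _) <|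
    .prodCongr (N' := T) (.refl _) AbTensor.liftEquiv⟩

theorem stmt_3 (G₁ G₂ : Type) [Group G₁] [Group G₂] [Fintype G₁] [Fintype G₂] :
    Nonempty (H2 (G₁ × G₂) ≃*
      (H2 G₁ × H2 G₂ ×
        Multiplicative ((TensorProduct ℤ (Additive (Abelianization G₁))
          (Additive (Abelianization G₂))) →+ Additive ℂˣ))) :=
  stmt_3_general G₁ G₂
end

section
/- Let G be a finite group, Z ≤ Z(G) ∩ G' a central subgroup contained in the derived subgroup, and α ∈ Z²(G, ℂˣ) a cocycle whose class lies in the image of the inflation map inf : H²(G/Z, ℂˣ) → H²(G, ℂˣ). Then ℂ^α G ≅ ∏_{[β] : inf([β]) = [α]} ℂ^β (G/Z) as ℂ-algebras, where the product ranges over the cohomology classes [β] ∈ H²(G/Z, ℂˣ) with inflation equal to [α]. -/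
/-- The inflation of a 2-cocycle of `G ⧸ N` to `G`. -/
def inflCocycle {G : Type} [Group G] (N : Subgroup G) [N.Normal]
    (β : (G ⧸ N) → (G ⧸ N) → ℂˣ) : G → G → ℂˣ :=
  fun x y => β (QuotientGroup.mk x) (QuotientGroup.mk y)

theorem inflCocycle_mem {G : Type} [Group G] (N : Subgroup G) [N.Normal]
    {β : (G ⧸ N) → (G ⧸ N) → ℂˣ} (hβ : β ∈ Z2 (G ⧸ N)) :
    inflCocycle N β ∈ Z2 G := by
  intro g h k
  simpa [inflCocycle] using hβ (QuotientGroup.mk g) (QuotientGroup.mk h) (QuotientGroup.mk k)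

/-- The inflation map `H²(G ⧸ N, ℂˣ) → H²(G, ℂˣ)` (computed via representatives). -/
noncomputable def inflMap {G : Type} [Group G] (N : Subgroup G) [N.Normal] : H2 (G ⧸ N) → H2 G :=
  fun c => QuotientGroup.mk
    ⟨inflCocycle N (Quotient.out c).1, inflCocycle_mem N (Quotient.out c).2⟩

/-!
Fix a presentation `α = inf β₀ · δφ₀`. Every class `c` of the fibre of inflation over `[α]` has
a presentation `α = inf β_c · δφ_c`, and on `Z` the normalised twists `β_c(1,1) φ_c` split `α`;
hence any two of them differ by a character of `Z`. Because `Z ≤ G'` this character depends only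
on the classes, and it determines them; twisting `β₀` by `χ` composed with the factor set of a
transversal (a cocycle because `Z` is central) realises every character `χ`. So the fibre is a
torsor under the character group of `Z` and has `|Z|` elements.

The maps `b_g ↦ φ_c(g) b_ḡ` are algebra homomorphisms `ℂ^α G → ℂ^{β_c}(G/Z)`. Their product
is injective by Fourier inversion on `Z`, and both sides have dimension `|G| = |Z| |G/Z|`.
-/

section Characters

variable {K : Type*} [CommGroup K]

lemma card_monoidHom_units_complex [Finite K] : Nat.card (K →* ℂˣ) = Nat.card K :=
  have : NeZero (Monoid.exponent K : ℂ) := ⟨by exact_mod_cast Monoid.exponent_ne_zero_of_finite⟩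
  CommGroup.card_monoidHom_of_hasEnoughRootsOfUnity K ℂ

instance [Finite K] : Finite (K →* ℂˣ) :=
  Nat.finite_of_card_ne_zero (card_monoidHom_units_complex (K := K) ▸ Nat.card_pos.ne')

lemma card_eq_of_bijective_monoidHom_units_complex [Finite K] {ι : Type*} {f : ι → K →* ℂˣ}
    (hf : Function.Bijective f) : Nat.card ι = Nat.card K :=
  (Nat.card_congr (Equiv.ofBijective f hf)).trans card_monoidHom_units_complex

lemma span_monoidHom_units_complex_eq_top [Fintype K] :
    Submodule.span ℂ (Set.range fun (χ : K →* ℂˣ) (k : K) => (χ k : ℂ)) = ⊤ := by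
  have : Fintype (K →* ℂˣ) := Fintype.ofFinite _
  have hli : LinearIndependent ℂ fun (χ : K →* ℂˣ) (k : K) => (χ k : ℂ) :=
    (linearIndependent_monoidHom K ℂ).comp (fun χ => (Units.coeHom ℂ).comp χ)
      fun χ χ' h => MonoidHom.ext fun k => Units.ext (DFunLike.congr_fun h k)
  refine hli.span_eq_top_of_card_eq_finrank' ?_
  rw [Module.finrank_fintype_fun_eq_card, ← Nat.card_eq_fintype_card,
    card_monoidHom_units_complex, Nat.card_eq_fintype_card]

lemma eq_zero_of_forall_sum_mul_monoidHom_eq_zero [Fintype K] {w : K → ℂ}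
    (hw : ∀ χ : K →* ℂˣ, ∑ k, w k * χ k = 0) : w = 0 := by
  classical
  let L : (K → ℂ) →ₗ[ℂ] ℂ := ∑ k, w k • LinearMap.proj k
  have hL : ∀ f, L f = ∑ k, w k * f k := fun f => by simp [L]
  have : L = 0 := LinearMap.ext_on_range span_monoidHom_units_complex_eq_top
    fun χ => by simpa [hL] using hw χ
  funext k
  simpa [hL, Pi.single_apply] using LinearMap.congr_fun this (Pi.single k 1)

end Characters

section Cocycles

variable {G : Type*} [Group G]

lemma apply_one_right_of_mem_Z2 {δ : G → G → ℂˣ} (hδ : δ ∈ Z2 G) (g : G) : δ g 1 = δ 1 1 := by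
  simpa using hδ g 1 1

lemma B2hom_apply (μ : G → ℂˣ) (g h : G) : B2hom G μ g h = μ g * μ h * (μ (g * h))⁻¹ := rfl

lemma mk_eq_mk_iff_H2 {β β' : Z2 G} :
    (QuotientGroup.mk β : H2 G) = QuotientGroup.mk β' ↔ ∃ ρ : G → ℂˣ, β'.1 = β.1 * B2hom G ρ := by
  rw [QuotientGroup.eq]
  simp only [Subgroup.mem_comap, Subgroup.coe_subtype, B2, MonoidHom.mem_range,
    Subgroup.coe_mul, Subgroup.coe_inv, inv_mul_eq_iff_eq_mul, eq_comm]

lemma B2hom_mem_Z2 (μ : G → ℂˣ) : B2hom G μ ∈ Z2 G := by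
  intro g h k
  simp only [B2hom_apply, mul_assoc]
  ext; push_cast; field_simp

/-- `μ / μ'` is a homomorphism, hence trivial on commutators. -/
lemma apply_eq_of_B2hom_eq {μ μ' : G → ℂˣ} (h : B2hom G μ = B2hom G μ') {z : G}
    (hz : z ∈ commutator G) : μ z = μ' z := by
  have hν : B2hom G (μ * μ'⁻¹) = 1 := by rw [map_mul, map_inv, h, mul_inv_cancel]
  let ν : G →* ℂˣ := MonoidHom.mk' (μ * μ'⁻¹) fun g k =>
    (mul_inv_eq_one.mp (congrFun (congrFun hν g) k)).symm
  exact mul_inv_eq_one.mp (Abelianization.commutator_subset_ker ν hz)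

end Cocycles

section Inflation

variable {G : Type} [Group G] (Z : Subgroup G) [Z.Normal]

lemma inflCocycle_mul (β β' : (G ⧸ Z) → (G ⧸ Z) → ℂˣ) :
    inflCocycle Z (β * β') = inflCocycle Z β * inflCocycle Z β' := rfl

lemma inflCocycle_B2hom (ρ : G ⧸ Z → ℂˣ) :
    inflCocycle Z (B2hom (G ⧸ Z) ρ) = B2hom G (fun g => ρ g) := rfl

variable {Z}

lemma mem_Z2_of_inflCocycle_mem {γ : (G ⧸ Z) → (G ⧸ Z) → ℂˣ} (h : inflCocycle Z γ ∈ Z2 G) :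
    γ ∈ Z2 (G ⧸ Z) := by
  intro q r t
  induction q using QuotientGroup.induction_on
  induction r using QuotientGroup.induction_on
  induction t using QuotientGroup.induction_on
  exact h _ _ _

/-- `ψ` is then constant on the cosets of `Z`, so it descends to `G ⧸ Z`. -/
lemma exists_B2hom_eq_of_inflCocycle_eq_B2hom {γ : (G ⧸ Z) → (G ⧸ Z) → ℂˣ} {ψ : G → ℂˣ}
    (hinf : inflCocycle Z γ = B2hom G ψ) (hψ : ∀ z ∈ Z, ψ z = ψ 1) :
    ∃ ρ : G ⧸ Z → ℂˣ, γ = B2hom (G ⧸ Z) ρ := by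
  have hγ : ∀ g h : G, γ g h = ψ g * ψ h * (ψ (g * h))⁻¹ := fun g h =>
    congrFun (congrFun hinf g) h
  have hcoset : ∀ g, ψ g = ψ (QuotientGroup.mk g : G ⧸ Z).out := by
    intro g
    obtain ⟨z, hz⟩ := QuotientGroup.mk_out_eq_mul Z g
    have h1 := hγ g 1
    have h2 := hγ g z
    rw [QuotientGroup.mk_one, mul_one, mul_inv_cancel_comm] at h1
    rw [(QuotientGroup.eq_one_iff _).mpr z.2, h1, hψ z z.2] at h2
    have h3 := mul_inv_eq_iff_eq_mul.mp h2.symm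
    rw [mul_comm (ψ g)] at h3
    rw [hz, mul_left_cancel h3]
  refine ⟨fun q => ψ q.out, funext fun q => funext fun r => ?_⟩
  induction q using QuotientGroup.induction_on with | H g => ?_
  induction r using QuotientGroup.induction_on with | H h => ?_
  rw [hγ, hcoset g, hcoset h, hcoset (g * h)]
  rfl

end Inflation

section FactorSet

variable {G : Type} [Group G] (Z : Subgroup G)

noncomputable def zPart (g : G) : Z :=
  ⟨(QuotientGroup.mk g : G ⧸ Z).out⁻¹ * g, QuotientGroup.eq.mp (QuotientGroup.out_eq' _)⟩

lemma out_mul_zPart (g : G) : (QuotientGroup.mk g : G ⧸ Z).out * zPart Z g = g :=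
  mul_inv_cancel_left _ _

lemma mk_out_mul (q : G ⧸ Z) (z : Z) : (QuotientGroup.mk (q.out * z) : G ⧸ Z) = q := by
  rw [QuotientGroup.mk_mul_of_mem _ z.2, QuotientGroup.out_eq']

noncomputable def outMulEquiv : (G ⧸ Z) × Z ≃ G where
  toFun x := x.1.out * x.2
  invFun g := (g, zPart Z g)
  left_inv x := Prod.ext (mk_out_mul Z x.1 x.2) (Subtype.ext (by simp [zPart]))
  right_inv := out_mul_zPart Z

variable [Z.Normal]

noncomputable def factorSet (q r : G ⧸ Z) : Z :=
  ⟨q.out * r.out * (q * r).out⁻¹, (QuotientGroup.eq_one_iff _).mp (by simp)⟩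

lemma factorSet_one_one_mul_zPart (z : Z) : factorSet Z 1 1 * zPart Z z = z := by
  ext
  simp [factorSet, zPart, (QuotientGroup.eq_one_iff _).mpr z.2]

lemma zPart_mul (hZ : Z ≤ Subgroup.center G) (g h : G) :
    zPart Z (g * h) = factorSet Z g h * zPart Z g * zPart Z h := by
  have central (z : Z) (x : G) : x * z = z * x := Subgroup.mem_center_iff.mp (hZ z.2) x
  set s : G ⧸ Z → G := Quotient.out
  have hf : (factorSet Z g h : G) * s (g * h) = s g * s h := inv_mul_cancel_right _ _
  apply Subtype.ext
  rw [Subgroup.coe_mul, Subgroup.coe_mul, zPart, Subtype.coe_mk, QuotientGroup.mk_mul,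
    inv_mul_eq_iff_eq_mul]
  calc g * h = s g * zPart Z g * (s h * zPart Z h) := by rw [out_mul_zPart, out_mul_zPart]
    _ = (factorSet Z g h : G) * s (g * h) * zPart Z g * zPart Z h := by
      rw [hf, mul_assoc (s g), ← mul_assoc (zPart Z g : G), ← central]; group
    _ = s (g * h) * (factorSet Z g h * zPart Z g * zPart Z h) := by rw [← central]; group

lemma inflCocycle_factorSet (hZ : Z ≤ Subgroup.center G) (χ : Z →* ℂˣ) :
    inflCocycle Z (fun q r => χ (factorSet Z q r)) = (B2hom G fun g => χ (zPart Z g))⁻¹ := by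
  funext g h
  rw [Pi.inv_apply, Pi.inv_apply, B2hom_apply, zPart_mul Z hZ, map_mul, map_mul]
  ext; push_cast; field_simp; rfl

end FactorSet

structure InflPresentation {G : Type} [Group G] (Z : Subgroup G) [Z.Normal] (α : G → G → ℂˣ) where
  β : Z2 (G ⧸ Z)
  φ : G → ℂˣ
  eq : α = inflCocycle Z β.1 * B2hom G φ

namespace InflPresentation

variable {G : Type} [Group G] {Z : Subgroup G} [Z.Normal] {α : G → G → ℂˣ}
  (p q r : InflPresentation Z α)

lemma apply_mul (g h : G) : α g h * p.φ (g * h) = p.β.1 g h * (p.φ g * p.φ h) := by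
  have h := congrFun (congrFun p.eq g) h
  rw [Pi.mul_apply, Pi.mul_apply, B2hom_apply] at h
  rw [h, mul_assoc, inv_mul_cancel_right]
  rfl

lemma apply_one_one : α 1 1 = p.β.1 1 1 * p.φ 1 := by
  have h := p.apply_mul 1 1
  rw [mul_one, QuotientGroup.mk_one, ← mul_assoc] at h
  exact mul_right_cancel h

def splitting (z : Z) : ℂˣ := p.β.1 1 1 * p.φ z

lemma φ_mul_of_mem (g : G) (z : Z) : p.φ (g * z) = (α g z)⁻¹ * (p.φ g * p.splitting z) := by
  have h := p.apply_mul g z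
  rw [(QuotientGroup.eq_one_iff _).mpr z.2, apply_one_right_of_mem_Z2 p.β.2] at h
  rw [eq_inv_mul_iff_mul_eq, h, splitting]
  ac_rfl

lemma splitting_mul (z w : Z) :
    p.splitting (z * w) = (α z w)⁻¹ * p.splitting z * p.splitting w := by
  simp only [splitting, Subgroup.coe_mul, φ_mul_of_mem]
  ac_rfl

def ratio : Z →* ℂˣ :=
  MonoidHom.mk' (fun z => p.splitting z / q.splitting z) fun z w => by
    rw [splitting_mul, splitting_mul]
    ext; push_cast; field_simp

lemma ratio_apply (z : Z) : p.ratio q z = p.splitting z / q.splitting z := rfl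

lemma splitting_eq_ratio_mul (z : Z) : p.splitting z = p.ratio q z * q.splitting z :=
  (div_mul_cancel _ _).symm

lemma ratio_mul_ratio : p.ratio q * q.ratio r = p.ratio r := by
  ext z
  simp only [MonoidHom.mul_apply, ratio_apply, div_mul_div_cancel]

lemma mk_β_eq_of_ratio_eq_one (h : p.ratio q = 1) :
    (QuotientGroup.mk p.β : H2 (G ⧸ Z)) = QuotientGroup.mk q.β := by
  have hinf : inflCocycle Z (q.β.1 / p.β.1) = B2hom G (p.φ / q.φ) := by
    change inflCocycle Z q.β.1 / inflCocycle Z p.β.1 = _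
    rw [map_div, div_eq_div_iff_mul_eq_mul, ← q.eq, mul_comm, ← p.eq]
  have hψ : ∀ z ∈ Z, (p.φ / q.φ) z = (p.φ / q.φ) 1 := by
    intro z hz
    have h1 := p.ratio_apply q ⟨z, hz⟩
    have h2 := p.ratio_apply q 1
    rw [h, MonoidHom.one_apply, eq_comm, div_eq_one, splitting, splitting] at h1 h2
    have h3 := congrArg₂ (· / ·) h1 h2
    simp only [mul_div_mul_left_eq_div, OneMemClass.coe_one] at h3
    rwa [Pi.div_apply, Pi.div_apply, div_eq_div_iff_div_eq_div]
  obtain ⟨ρ, hρ⟩ := exists_B2hom_eq_of_inflCocycle_eq_B2hom hinf hψ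
  exact mk_eq_mk_iff_H2.mpr ⟨ρ, by rw [← hρ, mul_div_cancel]⟩

lemma ratio_eq_one_of_mk_β_eq (hZ : Z ≤ commutator G)
    (h : (QuotientGroup.mk p.β : H2 (G ⧸ Z)) = QuotientGroup.mk q.β) : p.ratio q = 1 := by
  obtain ⟨ρ, hρ⟩ := mk_eq_mk_iff_H2.mp h
  have hB : B2hom G p.φ = B2hom G ((fun g : G => ρ g) * q.φ) := by
    have h' := p.eq.symm.trans q.eq
    rw [hρ, inflCocycle_mul, inflCocycle_B2hom, mul_assoc, ← map_mul] at h'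
    exact mul_left_cancel h'
  refine MonoidHom.ext fun z => ?_
  have hz := apply_eq_of_B2hom_eq hB (hZ z.2)
  rw [Pi.mul_apply, (QuotientGroup.eq_one_iff _).mpr z.2] at hz
  rw [ratio_apply, MonoidHom.one_apply, div_eq_one, splitting, splitting, hz, hρ, Pi.mul_apply,
    Pi.mul_apply, B2hom_apply, mul_one, mul_inv_cancel_right, mul_assoc]

lemma exists_ratio_eq (hZ : Z ≤ Subgroup.center G) (χ : Z →* ℂˣ) :
    ∃ p : InflPresentation Z α, p.ratio q = χ := by
  set γ : (G ⧸ Z) → (G ⧸ Z) → ℂˣ := fun a b => χ (factorSet Z a b)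
  set ν : G → ℂˣ := fun g => χ (zPart Z g)
  have hγ : inflCocycle Z γ = (B2hom G ν)⁻¹ := inflCocycle_factorSet Z hZ χ
  have hγZ2 : γ ∈ Z2 (G ⧸ Z) :=
    mem_Z2_of_inflCocycle_mem (by rw [hγ, ← map_inv]; exact B2hom_mem_Z2 _)
  refine ⟨⟨q.β * ⟨γ, hγZ2⟩, q.φ * ν, ?_⟩, MonoidHom.ext fun z => ?_⟩
  · rw [Subgroup.coe_mul, inflCocycle_mul, map_mul, mul_mul_mul_comm, hγ, inv_mul_cancel, mul_one]
    exact q.eq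
  · change q.β.1 1 1 * γ 1 1 * (q.φ z * ν z) / (q.β.1 1 1 * q.φ z) = χ z
    rw [mul_mul_mul_comm, mul_div_cancel_left, ← map_mul, factorSet_one_one_mul_zPart]

lemma exists_β_eq {β' : Z2 (G ⧸ Z)}
    (h : (QuotientGroup.mk p.β : H2 (G ⧸ Z)) = QuotientGroup.mk β') :
    ∃ p' : InflPresentation Z α, p'.β = β' := by
  obtain ⟨ρ, hρ⟩ := mk_eq_mk_iff_H2.mp h
  refine ⟨⟨β', p.φ / fun g : G => ρ g, ?_⟩, rfl⟩
  rw [hρ, inflCocycle_mul, inflCocycle_B2hom, map_div, mul_mul_div_cancel]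
  exact p.eq

end InflPresentation

section Fiber

variable {G : Type} [Group G] {Z : Subgroup G} [Z.Normal] {α : Z2 G}

lemma exists_φ_of_inflMap_eq {c : H2 (G ⧸ Z)} (h : inflMap Z c = QuotientGroup.mk α) :
    ∃ φ : G → ℂˣ, α.1 = inflCocycle Z c.out.1 * B2hom G φ :=
  mk_eq_mk_iff_H2.mp h

lemma inflMap_mk_β (p : InflPresentation Z α.1) :
    inflMap Z (QuotientGroup.mk p.β) = QuotientGroup.mk α := by
  obtain ⟨p', hp'⟩ := p.exists_β_eq (QuotientGroup.out_eq' (QuotientGroup.mk p.β : H2 (G ⧸ Z))).symm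
  refine mk_eq_mk_iff_H2.mpr ⟨p'.φ, ?_⟩
  change α.1 = inflCocycle Z (Quotient.out (QuotientGroup.mk p.β : H2 (G ⧸ Z))).1 * _
  rw [← hp']
  exact p'.eq

lemma bijective_ratio (hZc : Z ≤ Subgroup.center G) (hZd : Z ≤ commutator G)
    (w : {c : H2 (G ⧸ Z) // inflMap Z c = QuotientGroup.mk α} → InflPresentation Z α.1)
    (hw : ∀ c, QuotientGroup.mk (w c).β = c.1) (c₀ : {c // inflMap Z c = QuotientGroup.mk α}) :
    Function.Bijective fun c => (w c).ratio (w c₀) := by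
  refine ⟨fun c c' h => ?_, fun χ => ?_⟩
  · have h1 : (w c).ratio (w c') = 1 := by
      rw [← mul_left_inj ((w c').ratio (w c₀)), InflPresentation.ratio_mul_ratio,
        one_mul (M := Z →* ℂˣ)]
      exact h
    exact Subtype.ext ((hw c).symm.trans (((w c).mk_β_eq_of_ratio_eq_one _ h1).trans (hw c')))
  · obtain ⟨p, hp⟩ := (w c₀).exists_ratio_eq hZc χ
    let c : {c // inflMap Z c = QuotientGroup.mk α} := ⟨QuotientGroup.mk p.β, inflMap_mk_β p⟩
    refine ⟨c, show (w c).ratio (w c₀) = χ from ?_⟩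
    rw [← (w c).ratio_mul_ratio p, (w c).ratio_eq_one_of_mk_β_eq p hZd (hw c),
      one_mul (M := Z →* ℂˣ), hp]

end Fiber

section TwistedGroupAlgebra

lemma LinearMap.map_mul_of_map_mul_basis {R A B ι : Type*} [CommSemiring R] [Semiring A]
    [Algebra R A] [Semiring B] [Algebra R B] (b : Module.Basis ι R A) (f : A →ₗ[R] B)
    (h : ∀ i j, f (b i * b j) = f (b i) * f (b j)) (x y : A) : f (x * y) = f x * f y :=
  LinearMap.congr_fun₂ (LinearMap.ext_basis b b (B := (LinearMap.mul R A).compr₂ f)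
    (B' := (LinearMap.mul R B).compl₁₂ f f) h) x y

lemma one_eq_inv_smul_basis_one {G A : Type*} [Group G] [Semiring A] [Algebra ℂ A]
    {α : G → G → ℂˣ} (hα : α ∈ Z2 G) {b : Module.Basis G ℂ A}
    (hb : ∀ g h, b g * b h = (α g h : ℂ) • b (g * h)) : (1 : A) = (α 1 1 : ℂ)⁻¹ • b 1 := by
  have hr : LinearMap.mulRight ℂ ((α 1 1 : ℂ)⁻¹ • b 1) = LinearMap.id :=
    b.ext fun g => by
      rw [LinearMap.mulRight_apply, mul_smul_comm, hb, mul_one, smul_smul,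
        apply_one_right_of_mem_Z2 hα g, inv_mul_cancel₀ (Units.ne_zero _), one_smul,
        LinearMap.id_apply]
  simpa using (LinearMap.congr_fun hr 1).symm

variable {G : Type} [Group G] {Z : Subgroup G} [Z.Normal] {α : G → G → ℂˣ}
  {A B : Type*} [Ring A] [Algebra ℂ A] [Ring B] [Algebra ℂ B]
  {bA : Module.Basis G ℂ A} (hα : α ∈ Z2 G) (hbA : ∀ g h, bA g * bA h = (α g h : ℂ) • bA (g * h))
  (p : InflPresentation Z α) {bB : Module.Basis (G ⧸ Z) ℂ B}
  (hbB : ∀ q r, bB q * bB r = (p.β.1 q r : ℂ) • bB (q * r))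

namespace InflPresentation

noncomputable def algHom : A →ₐ[ℂ] B :=
  AlgHom.ofLinearMap (bA.constr ℂ fun g => (p.φ g : ℂ) • bB g)
    (by
      rw [one_eq_inv_smul_basis_one hα hbA, map_smul, Module.Basis.constr_basis,
        one_eq_inv_smul_basis_one p.β.2 hbB, smul_smul, QuotientGroup.mk_one, p.apply_one_one]
      push_cast
      field_simp)
    (LinearMap.map_mul_of_map_mul_basis bA _ fun g h => by
      rw [hbA, map_smul, Module.Basis.constr_basis, Module.Basis.constr_basis,
        Module.Basis.constr_basis, smul_mul_smul_comm, hbB, smul_smul, smul_smul,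
        ← QuotientGroup.mk_mul]
      congr 1
      exact_mod_cast (p.apply_mul g h).trans (mul_comm _ _))

lemma algHom_basis (g : G) : p.algHom hα hbA hbB (bA g) = (p.φ g : ℂ) • bB g :=
  bA.constr_basis ℂ _ g

lemma algHom_apply_eq_sum [Fintype G] [Fintype (G ⧸ Z)] [Fintype Z] (x : A) :
    p.algHom hα hbA hbB x = ∑ q, (∑ z : Z, bA.repr x (q.out * z) * p.φ (q.out * z)) • bB q := by
  conv_lhs => rw [← bA.sum_repr x]
  rw [map_sum, ← (outMulEquiv Z).sum_comp, Fintype.sum_prod_type]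
  refine Finset.sum_congr rfl fun q _ => ?_
  rw [Finset.sum_smul]
  refine Finset.sum_congr rfl fun z _ => ?_
  rw [map_smul, algHom_basis, smul_smul]
  simp only [outMulEquiv, Equiv.coe_fn_mk, mk_out_mul]

end InflPresentation

open InflPresentation in
/-- On each coset `sZ` the coordinates of `x`, suitably rescaled, have vanishing Fourier
transform, because the ratios of the twists `φᵢ` on `Z` run through all characters of `Z`. -/
lemma injective_pi_algHom [Fintype G] [Fintype (G ⧸ Z)] [Fintype Z] [IsMulCommutative Z]
    {ι : Type*} {B : ι → Type*} [∀ i, Ring (B i)] [∀ i, Algebra ℂ (B i)]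
    (w : ι → InflPresentation Z α) {bB : ∀ i, Module.Basis (G ⧸ Z) ℂ (B i)}
    (hbB : ∀ i q r, bB i q * bB i r = ((w i).β.1 q r : ℂ) • bB i (q * r)) (i₀ : ι)
    (hw : Function.Surjective fun i => (w i).ratio (w i₀)) :
    Function.Injective (AlgHom.pi fun i => (w i).algHom hα hbA (hbB i)) := by
  open scoped IsMulCommutative in
  refine (injective_iff_map_eq_zero _).mpr fun x hx => ?_
  have hcoeff (i) (q : G ⧸ Z) : ∑ z : Z, bA.repr x (q.out * z) * (w i).φ (q.out * z) = 0 :=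
    Fintype.linearIndependent_iff.mp (bB i).linearIndependent
      (fun q => ∑ z : Z, bA.repr x (q.out * z) * (w i).φ (q.out * z))
      (by rw [← algHom_apply_eq_sum hα hbA (w i) (hbB i)]; exact congrFun hx i) q
  have hzero (q : G ⧸ Z) (z : Z) : bA.repr x (q.out * z) = 0 := by
    let v (z : Z) : ℂ := bA.repr x (q.out * z) * ((α q.out z)⁻¹ : ℂˣ) * (w i₀).splitting z
    have hv : v = 0 := eq_zero_of_forall_sum_mul_monoidHom_eq_zero fun χ => by
      obtain ⟨i, rfl⟩ := hw χ
      have h : ((w i).φ q.out : ℂ) * ∑ z, v z * (w i).ratio (w i₀) z = 0 := by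
        rw [Finset.mul_sum, ← hcoeff i q]
        refine Finset.sum_congr rfl fun z _ => ?_
        rw [φ_mul_of_mem, splitting_eq_ratio_mul (w i) (w i₀)]
        simp only [v]
        push_cast
        ring
      exact (mul_eq_zero.mp h).resolve_left (Units.ne_zero _)
    simpa [v] using congrFun hv z
  exact bA.repr.map_eq_zero_iff.mp
    (Finsupp.ext fun g => by rw [← out_mul_zPart Z g]; exact hzero _ _)

lemma finrank_eq_finrank_pi_of_card_eq {G : Type} [Group G] [Finite G] {Z : Subgroup G}
    {ι : Type*} [Fintype ι] (hι : Nat.card ι = Nat.card Z) {A : Type*} {B : ι → Type*}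
    [AddCommGroup A] [Module ℂ A] [∀ i, AddCommGroup (B i)] [∀ i, Module ℂ (B i)]
    (bA : Module.Basis G ℂ A) (bB : ∀ i, Module.Basis (G ⧸ Z) ℂ (B i)) :
    Module.finrank ℂ A = Module.finrank ℂ (∀ i, B i) := by
  have (i : ι) : FiniteDimensional ℂ (B i) := .of_basis (bB i)
  simp only [Module.finrank_pi_fintype, Module.finrank_eq_nat_card_basis bA,
    fun i => Module.finrank_eq_nat_card_basis (bB i), Finset.sum_const, Finset.card_univ,
    ← Nat.card_eq_fintype_card, hι, smul_eq_mul, Subgroup.card_eq_card_quotient_mul_card_subgroup Z,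
    mul_comm]

end TwistedGroupAlgebra

theorem stmt_9 (G : Type) [Group G] [Fintype G] (Z : Subgroup G) [Z.Normal]
    (hZ : Z ≤ Subgroup.center G ⊓ commutator G)
    (α : ↥(Z2 G)) (hα : (QuotientGroup.mk α : H2 G) ∈ Set.range (inflMap Z))
    (A : Type) [Ring A] [Algebra ℂ A] (hA : IsTwistedGroupAlgebra G α.1 A)
    (B : ↥(Z2 (G ⧸ Z)) → Type) [∀ β, Ring (B β)] [∀ β, Algebra ℂ (B β)]
    (hB : ∀ β, IsTwistedGroupAlgebra (G ⧸ Z) β.1 (B β)) :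
    Nonempty (A ≃ₐ[ℂ]
      ∀ c : {c : H2 (G ⧸ Z) // inflMap Z c = QuotientGroup.mk α},
        B (Quotient.out c.1)) := by
  classical
  obtain ⟨hZc, hZd⟩ := le_inf_iff.mp hZ
  have : IsMulCommutative Z := ⟨⟨fun a b => Subtype.ext (Subgroup.mem_center_iff.mp (hZc b.2) a)⟩⟩
  obtain ⟨bA, hbA⟩ := hA
  choose bB hbB using hB
  choose φ hφ using fun c : {c // inflMap Z c = QuotientGroup.mk α} => exists_φ_of_inflMap_eq c.2
  let w c : InflPresentation Z α.1 := ⟨c.1.out, φ c, hφ c⟩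
  obtain ⟨c₀, hc₀⟩ := hα
  have hw := bijective_ratio hZc hZd w (fun c => QuotientGroup.out_eq' c.1) ⟨c₀, hc₀⟩
  let Φ := AlgHom.pi fun c => (w c).algHom α.2 hbA (hbB c.1.out)
  have hinj : Function.Injective Φ := injective_pi_algHom α.2 hbA w (fun c => hbB c.1.out) _ hw.2
  have : Finite {c // inflMap Z c = QuotientGroup.mk α} := .of_injective _ hw.1
  have : Fintype {c // inflMap Z c = QuotientGroup.mk α} := .ofFinite _
  have hdim : Module.finrank ℂ A =
      Module.finrank ℂ (∀ c : {c // inflMap Z c = QuotientGroup.mk α}, B c.1.out) :=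
    open scoped IsMulCommutative in
    finrank_eq_finrank_pi_of_card_eq (card_eq_of_bijective_monoidHom_units_complex hw) bA
      fun c => bB c.1.out
  have : FiniteDimensional ℂ A := .of_basis bA
  have (β : Z2 (G ⧸ Z)) : FiniteDimensional ℂ (B β) := .of_basis (bB β)
  exact ⟨AlgEquiv.ofBijective Φ ⟨hinj,
    (LinearMap.injective_iff_surjective_of_finrank_eq_finrank (f := Φ.toLinearMap) hdim).mp hinj⟩⟩
end

section
/- Let G be a finite group and let 1 → Z → G̃ → G → 1 be a central extension with Z ⊆ Z(G̃) ∩ G̃' and Z ≅ H²(G, ℂˣ) such that the transgression tra : Hom(Z, ℂˣ) → H²(G, ℂˣ) is an isomorphism (i.e. G̃ is a representation group of G). For χ ∈ Hom(Z, ℂˣ) with tra(χ) = [α], there is a bijection between the set Irr^α(G) of inequivalent irreducible α-representations of G and the set Irr(G̃ | χ) of irreducible complex representations of G̃ whose restriction to Z contains χ. -/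
/-- For a central extension `f : Gs → G` with section `μ`, the element
`μ x * μ y * (μ (x y))⁻¹` of `ker f`. -/
def secElem {Gs G : Type} [Group Gs] [Group G] (f : Gs →* G) (μ : G → Gs)
    (hμ : ∀ x, f (μ x) = x) (x y : G) : ↥f.ker :=
  ⟨μ x * μ y * (μ (x * y))⁻¹, by simp [MonoidHom.mem_ker, hμ, mul_assoc]⟩

/-- Isomorphism classes of `R`-modules satisfying a predicate `P`. -/
def modClasses (R : Type) [Ring R] (P : ModuleCat.{0} R → Prop) : Type 1 :=
  Quotient (⟨fun (M N : {M : ModuleCat.{0} R // P M}) => Nonempty (M.1 ≃ₗ[R] N.1),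
    ⟨fun M => ⟨LinearEquiv.refl R M.1⟩,
     fun h => h.elim fun e => ⟨e.symm⟩,
     fun h h' => h.elim fun e => h'.elim fun f => ⟨e.trans f⟩⟩⟩ : Setoid _)

/-- A module over the group algebra `ℂ[Gs]` lies over the character `χ` of a
central subgroup `Z` if it has a nonzero vector on which `Z` acts through `χ`. -/
def liesOver {Gs : Type} [Group Gs] (Z : Subgroup Gs) (χ : ↥Z →* ℂˣ)
    (M : ModuleCat.{0} (MonoidAlgebra ℂ Gs)) : Prop :=
  ∃ v : M, v ≠ 0 ∧ ∀ z : ↥Z,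
    (MonoidAlgebra.of ℂ Gs (z : Gs)) • v
      = (algebraMap ℂ (MonoidAlgebra ℂ Gs) ((χ z : ℂˣ) : ℂ)) • v

/-!
Choose the section `μ` and write `s = k(s) · μ(f s)` with `k(s) = s μ(f s)⁻¹ ∈ Z`. Since `Z` is
central, `s ↦ χ(k(s)) b_{f s}` is a homomorphism into the units of `ℂ^α G`, so it extends to a
surjective algebra map `Φ : ℂ[G̃] → ℂ^α G`, and simple `ℂ^α G`-modules are the simple
`ℂ[G̃]`-modules killed by `ker Φ`. On a simple `ℂ[G̃]`-module lying over `χ`, every central element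
`z - χ(z)` kills one nonzero vector, hence the whole module; there `s` acts as `χ(k(s)) μ(f s)`,
so `r` acts as the section of `Φ` applied to `Φ r`, and `ker Φ` acts trivially. Conversely
`z - χ(z) ∈ ker Φ`.
-/

section SurjectiveRingHom

variable {R S : Type} [Ring R] [Ring S] (π : R →+* S) (hπ : Function.Surjective π)

theorem IsSimpleModule.smul_eq_zero_of_commute {M : Type} [AddCommGroup M] [Module R M]
    [IsSimpleModule R M] {c : R} (hc : ∀ r, Commute c r) {v : M} (hv : v ≠ 0)
    (hcv : c • v = 0) (w : M) : c • w = 0 := by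
  obtain ⟨r, rfl⟩ := IsSimpleModule.toSpanSingleton_surjective R hv w
  rw [LinearMap.toSpanSingleton_apply, smul_smul, (hc r).eq, mul_smul, hcv, smul_zero]

include hπ in
theorem isSimpleModule_iff_of_smul_eq {M : Type} [AddCommGroup M] [Module R M] [Module S M]
    (hsmul : ∀ (r : R) (v : M), r • v = π r • v) :
    IsSimpleModule R M ↔ IsSimpleModule S M :=
  haveI : RingHomSurjective π := ⟨hπ⟩
  LinearMap.isSimpleModule_iff_of_bijective
    ({ toFun := id, map_add' := fun _ _ => rfl, map_smul' := hsmul } : M →ₛₗ[π] M)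
    Function.bijective_id

section Descend

variable {M : Type} [AddCommGroup M] [Module R M] (hM : RingHom.ker π ≤ Module.annihilator R M)

include hM in
theorem smul_choose_eq_smul (r : R) (v : M) : (hπ (π r)).choose • v = r • v := by
  have hker : (hπ (π r)).choose - r ∈ RingHom.ker π := by
    rw [RingHom.mem_ker, map_sub, (hπ (π r)).choose_spec, sub_self]
  rw [← sub_eq_zero, ← sub_smul]
  exact Module.mem_annihilator.mp (hM hker) v

noncomputable abbrev moduleOfKerLeAnnihilator : Module S M :=
  letI : SMul S M := ⟨fun s v => (hπ s).choose • v⟩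
  hπ.moduleLeft π (smul_choose_eq_smul π hπ hM)

end Descend

variable (P : ModuleCat R → Prop)
  (hP : ∀ M : ModuleCat R, IsSimpleModule R M → (P M ↔ RingHom.ker π ≤ Module.annihilator R M))

noncomputable def restrictSimple (M : {M : ModuleCat S // IsSimpleModule S M}) :
    {N : ModuleCat R // IsSimpleModule R N ∧ P N} :=
  have hsimple : IsSimpleModule R ((ModuleCat.restrictScalars π).obj M.1) :=
    (isSimpleModule_iff_of_smul_eq π hπ fun _ _ => rfl).mpr M.2
  ⟨_, hsimple, (hP _ hsimple).mpr fun r hr => Module.mem_annihilator.mpr fun v => by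
    rw [ModuleCat.restrictScalars.smul_def, RingHom.mem_ker.mp hr, zero_smul]; rfl⟩

noncomputable def descendSimple (N : {N : ModuleCat R // IsSimpleModule R N ∧ P N}) :
    {M : ModuleCat S // IsSimpleModule S M} :=
  have hN := (hP N.1 N.2.1).mp N.2.2
  letI := moduleOfKerLeAnnihilator π hπ hN
  ⟨ModuleCat.of S N.1, (isSimpleModule_iff_of_smul_eq π hπ
    fun r v => (smul_choose_eq_smul π hπ hN r v).symm).mp N.2.1⟩

include hπ hP in
theorem nonempty_equiv_modClasses_of_surjective :
    Nonempty (modClasses S (fun M => IsSimpleModule S M) ≃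
      modClasses R (fun M => IsSimpleModule R M ∧ P M)) := by
  refine ⟨⟨Quotient.map (restrictSimple π hπ P hP) ?_, Quotient.map (descendSimple π hπ P hP) ?_,
    ?_, ?_⟩⟩
  · rintro M M' ⟨e⟩
    exact ⟨((ModuleCat.restrictScalars π).mapIso e.toModuleIso).toLinearEquiv⟩
  · rintro N N' ⟨e⟩
    exact ⟨{ e with map_smul' := fun s v => e.map_smul _ v }⟩
  · rintro ⟨M⟩
    refine Quotient.sound ⟨
      { toFun := id
        invFun := id
        left_inv _ := rfl
        right_inv _ := rfl
        map_add' _ _ := rfl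
        map_smul' s v := by
          change π (hπ s).choose • (show M.1 from v) = s • (show M.1 from v)
          rw [(hπ s).choose_spec] }⟩
  · rintro ⟨N⟩
    refine Quotient.sound ⟨
      { toFun := id
        invFun := id
        left_inv _ := rfl
        right_inv _ := rfl
        map_add' _ _ := rfl
        map_smul' r v := by
          change (hπ (π r)).choose • (show N.1 from v) = r • (show N.1 from v)
          exact smul_choose_eq_smul π hπ ((hP N.1 N.2.1).mp N.2.2) r v }⟩

end SurjectiveRingHom

theorem Module.Basis.eq_smul_one_of_mul_basis {ι k A : Type*} [CommSemiring k] [Semiring A]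
    [Algebra k A] (b : Module.Basis ι k A) {x : A} {c : k} (h : ∀ i, x * b i = c • b i) :
    x = c • 1 := by
  have hmul : LinearMap.mulLeft k x = c • LinearMap.id := b.ext fun i => by simpa using h i
  simpa using DFunLike.congr_fun hmul 1

section CentralExtension

variable {Gs G : Type} [Group Gs] [Group G] (f : Gs →* G) (μ : G → Gs) (hμ : ∀ x, f (μ x) = x)

def kerPart (s : Gs) : f.ker := ⟨s * (μ (f s))⁻¹, by simp [MonoidHom.mem_ker, hμ]⟩

@[simp]
theorem coe_kerPart (s : Gs) : (kerPart f μ hμ s : Gs) = s * (μ (f s))⁻¹ := rfl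

theorem kerPart_section (x : G) : kerPart f μ hμ (μ x) = 1 := by
  ext; simp [hμ]

theorem kerPart_of_mem_ker (z : f.ker) : kerPart f μ hμ z = z * kerPart f μ hμ 1 := by
  ext; simp [MonoidHom.mem_ker.mp z.2]

theorem secElem_one_left (g : G) : secElem f μ hμ 1 g = (kerPart f μ hμ 1)⁻¹ := by
  ext; simp [secElem]

theorem kerPart_mul (hcent : f.ker ≤ Subgroup.center Gs) (s t : Gs) :
    kerPart f μ hμ (s * t) = kerPart f μ hμ s * kerPart f μ hμ t * secElem f μ hμ (f s) (f t) := by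
  have hcomm := Subgroup.mem_center_iff.mp (hcent (kerPart f μ hμ t).2) (μ (f s))
  ext
  simp only [coe_kerPart, map_mul, Subgroup.coe_mul, secElem] at hcomm ⊢
  calc s * t * (μ (f s * f t))⁻¹
      = s * (μ (f s))⁻¹ * (μ (f s) * (t * (μ (f t))⁻¹)) * (μ (f t) * (μ (f s * f t))⁻¹) := by
        group
    _ = s * (μ (f s))⁻¹ * (t * (μ (f t))⁻¹) * (μ (f s) * μ (f t) * (μ (f s * f t))⁻¹) := by
        rw [hcomm]; group

end CentralExtension

section TwistedGroupAlgebra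

open MonoidAlgebra

variable {Gs G : Type} [Group Gs] [Group G] (f : Gs →* G) (hcent : f.ker ≤ Subgroup.center Gs)
  (μ : G → Gs) (hμ : ∀ x, f (μ x) = x) (χ : f.ker →* ℂˣ)
  {A : Type} [Ring A] [Algebra ℂ A] (b : Module.Basis G ℂ A)
  (hb : ∀ g h : G, b g * b h = (χ (secElem f μ hμ g h) : ℂ) • b (g * h))

include hb in
theorem smul_basis_one : (χ (kerPart f μ hμ 1) : ℂ) • b 1 = 1 := by
  have h : b 1 = (χ (kerPart f μ hμ 1)⁻¹ : ℂ) • 1 :=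
    b.eq_smul_one_of_mul_basis fun g => by rw [hb, secElem_one_left, one_mul]
  rw [h, smul_smul, ← Units.val_mul, ← map_mul, mul_inv_cancel, map_one, Units.val_one, one_smul]

noncomputable def twistedRep : Gs →* A where
  toFun s := (χ (kerPart f μ hμ s) : ℂ) • b (f s)
  map_one' := by rw [map_one f]; exact smul_basis_one f μ hμ χ b hb
  map_mul' s t := by
    rw [smul_mul_smul_comm, hb, smul_smul, kerPart_mul f μ hμ hcent, map_mul, map_mul,
      Units.val_mul, Units.val_mul, map_mul f]

noncomputable def twistedLift : MonoidAlgebra ℂ Gs →ₐ[ℂ] A :=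
  MonoidAlgebra.lift ℂ A Gs (twistedRep f hcent μ hμ χ b hb)

theorem twistedLift_of (s : Gs) :
    twistedLift f hcent μ hμ χ b hb (of ℂ Gs s) = (χ (kerPart f μ hμ s) : ℂ) • b (f s) :=
  MonoidAlgebra.lift_of _ _

theorem twistedLift_of_section (x : G) :
    twistedLift f hcent μ hμ χ b hb (of ℂ Gs (μ x)) = b x := by
  rw [twistedLift_of, kerPart_section, map_one, Units.val_one, one_smul, hμ]

theorem twistedLift_of_mem_ker (z : f.ker) :
    twistedLift f hcent μ hμ χ b hb (of ℂ Gs z) = algebraMap ℂ A (χ z) := by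
  rw [twistedLift_of, kerPart_of_mem_ker, map_mul, Units.val_mul, mul_smul,
    MonoidHom.mem_ker.mp z.2, smul_basis_one f μ hμ χ b hb, Algebra.algebraMap_eq_smul_one]

noncomputable def sectionLift : A →ₗ[ℂ] MonoidAlgebra ℂ Gs :=
  b.constr ℂ fun x => of ℂ Gs (μ x)

theorem twistedLift_sectionLift (a : A) :
    twistedLift f hcent μ hμ χ b hb (sectionLift μ b a) = a := by
  have h : (twistedLift f hcent μ hμ χ b hb).toLinearMap ∘ₗ sectionLift μ b = LinearMap.id :=
    b.ext fun x => by
      rw [LinearMap.comp_apply, sectionLift, Module.Basis.constr_basis, AlgHom.toLinearMap_apply,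
        twistedLift_of_section, LinearMap.id_apply]
  exact DFunLike.congr_fun h a

theorem twistedLift_surjective : Function.Surjective (twistedLift f hcent μ hμ χ b hb) :=
  fun a => ⟨sectionLift μ b a, twistedLift_sectionLift f hcent μ hμ χ b hb a⟩

end TwistedGroupAlgebra

section SimpleModules

open MonoidAlgebra

theorem of_smul_eq_of_liesOver {Gs : Type} [Group Gs] {Z : Subgroup Gs}
    (hZ : Z ≤ Subgroup.center Gs) (χ : Z →* ℂˣ) {M : ModuleCat (MonoidAlgebra ℂ Gs)}
    [IsSimpleModule (MonoidAlgebra ℂ Gs) M] (hM : liesOver Z χ M) (z : Z) (w : M) :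
    of ℂ Gs z • w = algebraMap ℂ (MonoidAlgebra ℂ Gs) (χ z) • w := by
  obtain ⟨v, hv, hvZ⟩ := hM
  have hcentral : ∀ r, Commute (of ℂ Gs z - algebraMap ℂ _ (χ z)) r := fun r =>
    (of_commute (fun g => (Subgroup.mem_center_iff.mp (hZ z.2) g).symm) r).sub_left
      (Algebra.commute_algebraMap_left _ r)
  rw [← sub_eq_zero, ← sub_smul]
  exact IsSimpleModule.smul_eq_zero_of_commute hcentral hv (by rw [sub_smul, hvZ, sub_self]) w

variable {Gs G : Type} [Group Gs] [Group G] (f : Gs →* G) (hcent : f.ker ≤ Subgroup.center Gs)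
  (μ : G → Gs) (hμ : ∀ x, f (μ x) = x) (χ : f.ker →* ℂˣ)
  {A : Type} [Ring A] [Algebra ℂ A] (b : Module.Basis G ℂ A)
  (hb : ∀ g h : G, b g * b h = (χ (secElem f μ hμ g h) : ℂ) • b (g * h))
  (M : ModuleCat (MonoidAlgebra ℂ Gs)) [IsSimpleModule (MonoidAlgebra ℂ Gs) M]

theorem smul_eq_sectionLift_twistedLift_smul (hM : liesOver f.ker χ M)
    (r : MonoidAlgebra ℂ Gs) (w : M) :
    r • w = sectionLift μ b (twistedLift f hcent μ hμ χ b hb r) • w := by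
  induction r using MonoidAlgebra.induction_on generalizing w with
  | of s =>
    have hs : ((kerPart f μ hμ s : f.ker) : Gs) * μ (f s) = s := by simp
    rw [twistedLift_of, map_smul, sectionLift, Module.Basis.constr_basis]
    conv_lhs => rw [← hs]
    rw [map_mul, mul_smul, of_smul_eq_of_liesOver hcent χ hM, Algebra.smul_def, mul_smul]
  | add p q hp hq => rw [add_smul, hp, hq, map_add, map_add, add_smul]
  | smul c p hp =>
    rw [map_smul, map_smul, Algebra.smul_def, Algebra.smul_def (A := MonoidAlgebra ℂ Gs),
      mul_smul, mul_smul, hp]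

theorem liesOver_iff_ker_le_annihilator :
    liesOver f.ker χ M ↔
      RingHom.ker (twistedLift f hcent μ hμ χ b hb).toRingHom ≤
        Module.annihilator (MonoidAlgebra ℂ Gs) M := by
  constructor
  · intro hM r hr
    refine Module.mem_annihilator.mpr fun w => ?_
    have hr : twistedLift f hcent μ hμ χ b hb r = 0 := RingHom.mem_ker.mp hr
    rw [smul_eq_sectionLift_twistedLift_smul f hcent μ hμ χ b hb M hM, hr, map_zero, zero_smul]
  · intro hker
    have := IsSimpleModule.nontrivial (MonoidAlgebra ℂ Gs) M
    obtain ⟨v, hv⟩ := exists_ne (0 : M)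
    refine ⟨v, hv, fun z => sub_eq_zero.mp ?_⟩
    rw [← sub_smul]
    refine Module.mem_annihilator.mp (hker ?_) v
    rw [RingHom.mem_ker, map_sub, AlgHom.toRingHom_eq_coe, RingHom.coe_coe,
      twistedLift_of_mem_ker f hcent μ hμ χ b hb, AlgHom.commutes, sub_self]

end SimpleModules

theorem stmt_10_general (Gs G : Type) [Group Gs] [Group G]
    (f : Gs →* G) (hcent : f.ker ≤ Subgroup.center Gs)
    (μ : G → Gs) (hμ : ∀ x, f (μ x) = x)
    (χ : ↥f.ker →* ℂˣ)
    (A : Type) [Ring A] [Algebra ℂ A]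
    (hA : IsTwistedGroupAlgebra G (fun x y => χ (secElem f μ hμ x y)) A) :
    Nonempty (modClasses A (fun M => IsSimpleModule A M) ≃
      modClasses (MonoidAlgebra ℂ Gs)
        (fun M => IsSimpleModule (MonoidAlgebra ℂ Gs) M ∧ liesOver f.ker χ M)) := by
  obtain ⟨b, hb⟩ := hA
  exact nonempty_equiv_modClasses_of_surjective _ (twistedLift_surjective f hcent μ hμ χ b hb) _
    fun M _ => liesOver_iff_ker_le_annihilator f hcent μ hμ χ b hb M

theorem stmt_10 (Gs G : Type) [Group Gs] [Group G] [Fintype Gs] [Fintype G]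
    (f : Gs →* G) (hsurj : Function.Surjective f)
    (hcent : f.ker ≤ Subgroup.center Gs) (hder : f.ker ≤ commutator Gs)
    (μ : G → Gs) (hμ : ∀ x, f (μ x) = x)
    (hcoc : ∀ χ : ↥f.ker →* ℂˣ, (fun x y => χ (secElem f μ hμ x y)) ∈ Z2 G)
    (htra : Function.Bijective fun χ : ↥f.ker →* ℂˣ =>
      (QuotientGroup.mk ⟨fun x y => χ (secElem f μ hμ x y), hcoc χ⟩ : H2 G))
    (χ : ↥f.ker →* ℂˣ)
    (A : Type) [Ring A] [Algebra ℂ A]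
    (hA : IsTwistedGroupAlgebra G (fun x y => χ (secElem f μ hμ x y)) A) :
    Nonempty (modClasses A (fun M => IsSimpleModule A M) ≃
      modClasses (MonoidAlgebra ℂ Gs)
        (fun M => IsSimpleModule (MonoidAlgebra ℂ Gs) M ∧ liesOver f.ker χ M)) :=
  stmt_10_general Gs G f hcent μ hμ χ A hA
end

section
/- Let p be a prime and let G̃ be the group of order p⁶ given by the presentation ⟨α₁, α₂, β | [α₁, α₂] = β, α₁^{p²} = β, α₂^{p²} = 1, β^{p²} = 1, β central ⟩. Then N = ⟨α₁^p, α₂^p⟩ is an abelian normal subgroup of G̃ of order p⁴, and for a character χ of N with χ(α₁^{p³}) a primitive p-th root of unity, the inertia group I_{G̃}(χ) equals N. -/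
/-!
The commutator of the generators is the central element `c = a ^ p ^ 2`, so `G ⧸ ⟨c⟩` is abelian
and every subgroup containing `c`, such as `N = ⟨a ^ p, b ^ p⟩ ∋ (a ^ p) ^ p = c`, is normal.
Conjugation by `b ^ j` multiplies `a ^ p` by `c ^ (p * j) = (a ^ p ^ 3) ^ j`, and conjugation by
`a ^ i` multiplies `b ^ p` by `(a ^ p ^ 3) ^ (-i)`. Since `c ^ p ^ 2 = 1`, the generators of `N`
commute, so `N` is abelian of order at most `p ^ 3 * p`, while `G ⧸ N` is generated by two commuting
elements of order dividing `p`; as `|G| = p ^ 6`, both bounds are attained. Finally write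
`g = b ^ j * a ^ i * m` with `m ∈ N`: if `g` fixes `χ`, then `χ (a ^ p ^ 3)` raised to `j` and to
`-i` is `1`, so primitivity gives `p ∣ i` and `p ∣ j`, that is `g ∈ N`.
-/

open Subgroup

section

variable {G : Type*} [Group G]

theorem exists_eq_zpow_mul_zpow_of_mem_closure_pair {x y : G} (hxy : Commute x y) {g : G}
    (hg : g ∈ closure {x, y}) : ∃ i j : ℤ, g = x ^ i * y ^ j := by
  induction hg using closure_induction with
  | mem z hz =>
    rcases hz with rfl | rfl
    · exact ⟨1, 0, by simp⟩
    · exact ⟨0, 1, by simp⟩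
  | one => exact ⟨0, 0, by simp⟩
  | mul u v _ _ ihu ihv =>
    obtain ⟨i, j, rfl⟩ := ihu
    obtain ⟨k, l, rfl⟩ := ihv
    refine ⟨i + k, j + l, ?_⟩
    rw [zpow_add, zpow_add, mul_assoc, ← mul_assoc (y ^ j), ((hxy.zpow_zpow k j).eq).symm]
    group
  | inv u _ ihu =>
    obtain ⟨i, j, rfl⟩ := ihu
    exact ⟨-i, -j, by rw [mul_inv_rev, zpow_neg, zpow_neg, (hxy.zpow_zpow i j).inv_inv.eq]⟩

theorem isMulCommutative_closure_pair {x y : G} (hxy : Commute x y) :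
    IsMulCommutative (closure {x, y}) :=
  isMulCommutative_closure <| by
    simp only [Set.mem_insert_iff, Set.mem_singleton_iff]
    rintro _ (rfl | rfl) _ (rfl | rfl)
    exacts [rfl, hxy.eq, hxy.symm.eq, rfl]

theorem isMulCommutative_of_closure_pair_eq_top {x y : G} (hxy : Commute x y)
    (hgen : closure {x, y} = ⊤) : IsMulCommutative G :=
  have := isMulCommutative_closure_pair hxy
  .of_comm fun u v ↦ setLike_mul_comm (s := closure {x, y}) (by simp [hgen]) (by simp [hgen])

theorem card_closure_pair_le [Finite G] {x y : G} (hxy : Commute x y) :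
    Nat.card (closure {x, y}) ≤ orderOf x * orderOf y := by
  have hx : zpowers x ≤ closure {x, y} := zpowers_le.mpr (subset_closure (by simp))
  have hy : zpowers y ≤ closure {x, y} := zpowers_le.mpr (subset_closure (by simp))
  have hsurj : Function.Surjective fun uv : zpowers x × zpowers y ↦
      (⟨uv.1 * uv.2, mul_mem (hx uv.1.2) (hy uv.2.2)⟩ : closure {x, y}) := by
    rintro ⟨g, hg⟩
    obtain ⟨i, j, rfl⟩ := exists_eq_zpow_mul_zpow_of_mem_closure_pair hxy hg
    exact ⟨(⟨x ^ i, zpow_mem_zpowers x i⟩, ⟨y ^ j, zpow_mem_zpowers y j⟩), rfl⟩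
  calc Nat.card (closure {x, y}) ≤ Nat.card (zpowers x × zpowers y) :=
        Nat.card_le_card_of_surjective _ hsurj
    _ = orderOf x * orderOf y := by rw [Nat.card_prod, Nat.card_zpowers, Nat.card_zpowers]

theorem zpowers_normal_of_forall_commute {c : G} (hc : ∀ g, Commute c g) :
    (zpowers c).Normal where
  conj_mem n hn g := by
    obtain ⟨k, rfl⟩ := mem_zpowers_iff.mp hn
    rwa [((hc g).zpow_left k).symm.eq, mul_inv_cancel_right]

theorem conj_zpow_zpow_of_conj_eq {a b c : G} (hca : Commute c a) (hcb : Commute c b)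
    (h : b⁻¹ * a * b = a * c) (i j : ℤ) : (b ^ j)⁻¹ * a ^ i * b ^ j = a ^ i * c ^ (i * j) := by
  have hab : a⁻¹ * b * a = b * c⁻¹ := calc
    a⁻¹ * b * a = b * (b⁻¹ * a * b)⁻¹ * a := by group
    _ = b * c⁻¹ := by rw [h]; group
  have hbj : a⁻¹ * b ^ j * a = b ^ j * c ^ (-j) := by
    have := conj_zpow (i := j) (a := a⁻¹) (b := b)
    rw [inv_inv] at this
    rw [← this, hab, hcb.inv_left.symm.mul_zpow, inv_zpow']
  have haj : (b ^ j)⁻¹ * a * b ^ j = a * c ^ j := calc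
    (b ^ j)⁻¹ * a * b ^ j = a * (a⁻¹ * b ^ j * a)⁻¹ * b ^ j := by group
    _ = a * c ^ j := by rw [hbj]; group
  have := conj_zpow (i := i) (a := (b ^ j)⁻¹) (b := a)
  rw [inv_inv] at this
  rw [← this, haj, (hca.zpow_left j).symm.mul_zpow, ← zpow_mul, mul_comm]

end

namespace QuotientGroup

variable {G : Type*} [Group G] {H : Subgroup G} [H.Normal]

theorem commute_mk_of_mem {a b : G} (h : a⁻¹ * b⁻¹ * a * b ∈ H) : Commute (a : G ⧸ H) b := by
  have : ((b * a : G) : G ⧸ H) = ((a * b : G) : G ⧸ H) :=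
    QuotientGroup.eq.mpr (by simpa [mul_assoc] using h)
  exact Commute.symm this

theorem closure_pair_mk_eq_top {x y : G} (hgen : closure {x, y} = ⊤) :
    closure {(x : G ⧸ H), (y : G ⧸ H)} = ⊤ := by
  have : ({(x : G ⧸ H), (y : G ⧸ H)} : Set (G ⧸ H)) = mk' H '' {x, y} := by
    simp [Set.image_insert_eq]
  rw [this, ← MonoidHom.map_closure, hgen, map_top_of_surjective _ (mk'_surjective H)]

end QuotientGroup

theorem exists_eq_zpow_mul_zpow_mul_mem {G : Type*} [Group G] {H : Subgroup G} [H.Normal]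
    {x y : G} (hgen : closure {x, y} = ⊤) (hxy : Commute (x : G ⧸ H) y) (g : G) :
    ∃ i j : ℤ, ∃ h ∈ H, g = x ^ i * y ^ j * h := by
  obtain ⟨i, j, hij⟩ := exists_eq_zpow_mul_zpow_of_mem_closure_pair hxy
    (g := (g : G ⧸ H)) (by simp [QuotientGroup.closure_pair_mk_eq_top hgen])
  refine ⟨i, j, (x ^ i * y ^ j)⁻¹ * g, ?_, by group⟩
  rw [← QuotientGroup.eq, hij, QuotientGroup.mk_mul, QuotientGroup.mk_zpow, QuotientGroup.mk_zpow]

theorem map_eq_one_of_forall_conj_eq {G M : Type*} [Group G] [Group M] {N : Subgroup G}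
    (χ : N →* M) {g : G} (hχ : ∀ (n : N) (h : g⁻¹ * ↑n * g ∈ N), χ ⟨g⁻¹ * ↑n * g, h⟩ = χ n)
    {x z : N} (hxz : g⁻¹ * ↑x * g = ↑(x * z)) : χ z = 1 := by
  have := hχ x (hxz ▸ (x * z).2)
  rwa [show (⟨_, _⟩ : N) = x * z from Subtype.ext hxz, map_mul, mul_eq_left] at this

/-- The relations of the presentation of `G̃`, with `a = α₁`, `b = α₂`, `c = β`. -/
structure SatisfiesRelations {G : Type*} [Group G] (p : ℕ) (a b c : G) : Prop where
  comm : a⁻¹ * b⁻¹ * a * b = c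
  a_pow : a ^ p ^ 2 = c
  b_pow : b ^ p ^ 2 = 1
  c_pow : c ^ p ^ 2 = 1
  central : ∀ g, Commute c g

namespace SatisfiesRelations

variable {G : Type*} [Group G] {p : ℕ} {a b c : G}

theorem c_pow_p (h : SatisfiesRelations p a b c) : c ^ p = a ^ p ^ 3 := by
  rw [← h.a_pow, ← pow_mul, ← pow_succ]

theorem conj_a_pow (h : SatisfiesRelations p a b c) (j : ℤ) :
    (b ^ j)⁻¹ * a ^ p * b ^ j = a ^ p * (a ^ p ^ 3) ^ j := by
  have hba : b⁻¹ * a * b = a * c := by rw [← h.comm]; group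
  have := conj_zpow_zpow_of_conj_eq (h.central a) (h.central b) hba p j
  rwa [zpow_natCast, zpow_mul, zpow_natCast, h.c_pow_p] at this

theorem conj_b_pow (h : SatisfiesRelations p a b c) (i : ℤ) :
    (a ^ i)⁻¹ * b ^ p * a ^ i = b ^ p * (a ^ p ^ 3) ^ (-i) := by
  have hab : a⁻¹ * b * a = b * c⁻¹ := by rw [← h.comm]; group
  have := conj_zpow_zpow_of_conj_eq (h.central b).inv_left (h.central a).inv_left hab p i
  rwa [zpow_natCast, zpow_mul, zpow_natCast, inv_pow, h.c_pow_p, inv_zpow'] at this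

theorem pow_p_pow_p_cube (h : SatisfiesRelations p a b c) : (a ^ p) ^ p ^ 3 = 1 := by
  rw [← pow_mul, ← pow_succ', show p ^ (3 + 1) = p ^ 2 * p ^ 2 by ring, pow_mul, h.a_pow, h.c_pow]

theorem c_mem_closure_pow (h : SatisfiesRelations p a b c) : c ∈ closure {a ^ p, b ^ p} := by
  rw [← h.a_pow, sq, pow_mul]
  exact pow_mem (subset_closure (by simp)) p

theorem commute_pow_pow (h : SatisfiesRelations p a b c) : Commute (a ^ p) (b ^ p) := by
  have hconj := h.conj_a_pow p
  rw [zpow_natCast, zpow_natCast, ← pow_mul, mul_comm, pow_mul, h.pow_p_pow_p_cube, mul_one]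
    at hconj
  calc a ^ p * b ^ p = b ^ p * ((b ^ p)⁻¹ * a ^ p * b ^ p) := by group
    _ = b ^ p * a ^ p := by rw [hconj]

theorem commutator_le_zpowers (h : SatisfiesRelations p a b c) (hgen : closure {a, b} = ⊤) :
    commutator G ≤ zpowers c := by
  have := zpowers_normal_of_forall_commute h.central
  refine Normal.quotient_commutative_iff_commutator_le.mp ?_
  refine isMulCommutative_of_closure_pair_eq_top ?_ (QuotientGroup.closure_pair_mk_eq_top hgen)
  exact QuotientGroup.commute_mk_of_mem (h.comm ▸ mem_zpowers c)

theorem closure_pow_normal (h : SatisfiesRelations p a b c) (hgen : closure {a, b} = ⊤) :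
    (closure {a ^ p, b ^ p}).Normal :=
  Normal.of_commutator_le (G := G)
    ((h.commutator_le_zpowers hgen).trans (zpowers_le.mpr h.c_mem_closure_pow))

theorem card_closure_pow [Finite G] (h : SatisfiesRelations p a b c) (hp : 0 < p)
    (hgen : closure {a, b} = ⊤) (hcard : Nat.card G = p ^ 6) :
    Nat.card (closure {a ^ p, b ^ p}) = p ^ 4 := by
  have := h.closure_pow_normal hgen
  have hN : Nat.card (closure {a ^ p, b ^ p}) ≤ p ^ 3 * p := by
    refine (card_closure_pair_le h.commute_pow_pow).trans (Nat.mul_le_mul ?_ ?_)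
    · exact orderOf_le_of_pow_eq_one (by positivity) h.pow_p_pow_p_cube
    · exact orderOf_le_of_pow_eq_one hp (by rw [← pow_mul, ← sq, h.b_pow])
  have hQ : Nat.card (G ⧸ closure {a ^ p, b ^ p}) ≤ p * p := by
    rw [← card_top, ← QuotientGroup.closure_pair_mk_eq_top hgen]
    refine (card_closure_pair_le ?_).trans (Nat.mul_le_mul ?_ ?_)
    · exact QuotientGroup.commute_mk_of_mem (h.comm ▸ h.c_mem_closure_pow)
    all_goals
      refine orderOf_le_of_pow_eq_one hp ?_
      rw [← QuotientGroup.mk_pow, QuotientGroup.eq_one_iff]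
      exact subset_closure (by simp)
  have hprod := card_eq_card_quotient_mul_card_subgroup (closure {a ^ p, b ^ p})
  rw [hcard, show p ^ 6 = p * p * (p ^ 3 * p) by ring] at hprod
  rw [((mul_eq_mul_iff_eq_and_eq_of_pos hQ hN Nat.card_pos (by positivity)).mp hprod.symm).2]
  ring

theorem mem_closure_pow_of_forall_conj_eq {M : Type*} [CommGroup M]
    (h : SatisfiesRelations p a b c) (hgen : closure {a, b} = ⊤) (χ : closure {a ^ p, b ^ p} →* M)
    (hmem : a ^ p ^ 3 ∈ closure {a ^ p, b ^ p}) (hprim : IsPrimitiveRoot (χ ⟨a ^ p ^ 3, hmem⟩) p)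
    {g : G} (hχ : ∀ (n : closure {a ^ p, b ^ p}) (hn : g⁻¹ * ↑n * g ∈ closure {a ^ p, b ^ p}),
      χ ⟨g⁻¹ * ↑n * g, hn⟩ = χ n) :
    g ∈ closure {a ^ p, b ^ p} := by
  have := h.closure_pow_normal hgen
  have := isMulCommutative_closure_pair h.commute_pow_pow
  have hapN : a ^ p ∈ closure {a ^ p, b ^ p} := subset_closure (by simp)
  have hbpN : b ^ p ∈ closure {a ^ p, b ^ p} := subset_closure (by simp)
  obtain ⟨j, i, m, hm, rfl⟩ := exists_eq_zpow_mul_zpow_mul_mem (x := b) (y := a)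
    (by rw [Set.pair_comm, hgen])
    (QuotientGroup.commute_mk_of_mem (h.comm ▸ h.c_mem_closure_pow)).symm g
  have hj : (p : ℤ) ∣ j := by
    refine (hprim.zpow_eq_one_iff_dvd j).mp ?_
    rw [← map_zpow]
    refine map_eq_one_of_forall_conj_eq χ hχ (x := ⟨a ^ p, hapN⟩) ?_
    calc (b ^ j * a ^ i * m)⁻¹ * a ^ p * (b ^ j * a ^ i * m)
        = m⁻¹ * ((a ^ i)⁻¹ * ((b ^ j)⁻¹ * a ^ p * b ^ j) * a ^ i) * m := by group
      _ = m⁻¹ * (a ^ p * (a ^ p ^ 3) ^ j) * m := by rw [h.conj_a_pow]; group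
      _ = a ^ p * (a ^ p ^ 3) ^ j :=
        Commute.inv_mul_cancel (setLike_mul_comm hm (mul_mem hapN (zpow_mem hmem j)))
  have hi : (p : ℤ) ∣ -i := by
    refine (hprim.zpow_eq_one_iff_dvd (-i)).mp ?_
    rw [← map_zpow]
    refine map_eq_one_of_forall_conj_eq χ hχ (x := ⟨b ^ p, hbpN⟩) ?_
    calc (b ^ j * a ^ i * m)⁻¹ * b ^ p * (b ^ j * a ^ i * m)
        = m⁻¹ * ((a ^ i)⁻¹ * ((b ^ j)⁻¹ * b ^ p * b ^ j) * a ^ i) * m := by group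
      _ = m⁻¹ * (b ^ p * (a ^ p ^ 3) ^ (-i)) * m := by rw [← h.conj_b_pow]; group
      _ = b ^ p * (a ^ p ^ 3) ^ (-i) :=
        Commute.inv_mul_cancel (setLike_mul_comm hm (mul_mem hbpN (zpow_mem hmem _)))
  obtain ⟨j, rfl⟩ := hj
  obtain ⟨i, rfl⟩ := Int.dvd_neg.mp hi
  rw [zpow_mul, zpow_mul, zpow_natCast, zpow_natCast]
  exact mul_mem (mul_mem (zpow_mem hbpN j) (zpow_mem hapN i)) hm

end SatisfiesRelations

theorem stmt_16 (p : ℕ) (hp : p.Prime) (Gt : Type) [Group Gt] [Fintype Gt]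
    (a b c : Gt)
    (hrel1 : a⁻¹ * b⁻¹ * a * b = c)
    (hrel2 : a ^ (p ^ 2) = c) (hrel3 : b ^ (p ^ 2) = 1) (hrel4 : c ^ (p ^ 2) = 1)
    (hcentral : ∀ g : Gt, c * g = g * c)
    (hgen : Subgroup.closure {a, b} = ⊤)
    (hcard : Fintype.card Gt = p ^ 6)
    (N : Subgroup Gt) (hNdef : N = Subgroup.closure {a ^ p, b ^ p})
    (χ : ↥N →* ℂˣ) (hmem : a ^ (p ^ 3) ∈ N)
    (hprim : IsPrimitiveRoot (χ ⟨a ^ (p ^ 3), hmem⟩) p) :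
    N.Normal ∧ (∀ x y : ↥N, x * y = y * x) ∧ Nat.card ↥N = p ^ 4 ∧
      (∀ g : Gt, g ∈ N ↔
        ∀ (n : ↥N) (h : g⁻¹ * ↑n * g ∈ N), χ ⟨g⁻¹ * ↑n * g, h⟩ = χ n) := by
  subst hNdef
  have h : SatisfiesRelations p a b c := ⟨hrel1, hrel2, hrel3, hrel4, hcentral⟩
  have := isMulCommutative_closure_pair h.commute_pow_pow
  refine ⟨h.closure_pow_normal hgen, mul_comm',
    h.card_closure_pow hp.pos hgen (by rw [Nat.card_eq_fintype_card, hcard]),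
    fun g ↦ ⟨fun hg n _ ↦ ?_, h.mem_closure_pow_of_forall_conj_eq hgen χ hmem hprim⟩⟩
  exact congrArg χ (Subtype.ext (Commute.inv_mul_cancel (setLike_mul_comm hg n.2)))
end
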